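/- Let f ∈ H¹_c(ℍ_a) and 1 ≤ q < ∞. Then the Mellin distance of f(·,0) from the Mellin–Bernstein class 𝓑¹_{c,σ} satisfies dist_q(f, 𝓑¹_{c,σ}) ≤ 2 ‖f‖_{H¹_c(ℍ_a)} (2/(aq))^{1/q} e^{−aσ}. -/

import Mathlib

open MeasureTheory Complex Filter Topology Set

noncomputable section

/-- The right half-plane `H = {(r,θ) : r > 0}` in polar coordinates. -/
def HH : Set (ℝ × ℝ) := {q | 0 < q.1}

/-- The horizontal strip `ℍ_a = {(r,θ) : r > 0, |θ| < a}`. -/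
def Hstrip (a : ℝ) : Set (ℝ × ℝ) := {q | 0 < q.1 ∧ |q.2| < a}

/-- `f` has polar derivative `L` at the point `p` (within the set `D`): the limit of the
difference quotient `(f(r,θ) - f(r₀,θ₀))/(re^{iθ} - r₀e^{iθ₀})` exists and equals `L`. -/
def HasPolarDerivAt (f : ℝ × ℝ → ℂ) (L : ℂ) (D : Set (ℝ × ℝ)) (p : ℝ × ℝ) : Prop :=
  Filter.Tendsto
    (fun q : ℝ × ℝ =>
      (f q - f p) /
        ((q.1 : ℂ) * Complex.exp (Complex.I * q.2) - (p.1 : ℂ) * Complex.exp (Complex.I * p.2)))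
    (nhdsWithin p (D \ {p})) (nhds L)

/-- `f` is polar-analytic on `D`. -/
def PolarAnalyticOn (f : ℝ × ℝ → ℂ) (D : Set (ℝ × ℝ)) : Prop :=
  ∀ p ∈ D, ∃ L : ℂ, HasPolarDerivAt f L D p

/-- Membership in the Mellin space `X^p_c`. -/
def MemX (c p : ℝ) (φ : ℝ → ℂ) : Prop :=
  AEStronglyMeasurable φ (volume.restrict (Set.Ioi 0)) ∧
    IntegrableOn (fun r : ℝ => ‖φ r‖ ^ p * r ^ (c * p - 1)) (Set.Ioi 0)

/-- The norm of `X^p_c`. -/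
def Xnorm (c p : ℝ) (φ : ℝ → ℂ) : ℝ :=
  (∫ r in Set.Ioi (0 : ℝ), ‖φ r‖ ^ p * r ^ (c * p - 1)) ^ (1 / p)

/-- The Mellin--Bernstein space `𝓑^p_{c,T}`. -/
def MemBernstein (c T p : ℝ) (f : ℝ × ℝ → ℂ) : Prop :=
  PolarAnalyticOn f HH ∧ MemX c p (fun r => f (r, 0)) ∧
    ∃ C : ℝ, 0 < C ∧ ∀ r θ : ℝ, 0 < r → ‖f (r, θ)‖ ≤ C * r ^ (-c) * Real.exp (T * |θ|)

/-- The set of values whose supremum defines the Mellin--Hardy norm. -/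
def hardyVals (c p a : ℝ) (f : ℝ × ℝ → ℂ) : Set ℝ :=
  {v | ∃ θ : ℝ, 0 < θ ∧ θ < a ∧
    v = (((Xnorm c p fun r => f (r, θ)) ^ p + (Xnorm c p fun r => f (r, -θ)) ^ p) / 2) ^ (1 / p)}

/-- Membership in the Mellin--Hardy space `H^p_c(ℍ_a)`. -/
def MemHardy (c p a : ℝ) (f : ℝ × ℝ → ℂ) : Prop :=
  PolarAnalyticOn f (Hstrip a) ∧ (∀ θ : ℝ, |θ| < a → MemX c p fun r => f (r, θ)) ∧
    BddAbove (hardyVals c p a f)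

/-- The Mellin--Hardy norm. -/
def HardyNorm (c p a : ℝ) (f : ℝ × ℝ → ℂ) : ℝ :=
  sSup (hardyVals c p a f)

/-- `Mφ` is the Mellin--Plancherel transform (`p = 2`) of `φ` on the line `c + iℝ`:
the truncated Mellin integrals converge to `Mφ` in the `L²` sense. -/
def IsMellin2 (c : ℝ) (φ Mφ : ℝ → ℂ) : Prop :=
  MeasureTheory.MemLp Mφ 2 (volume : Measure ℝ) ∧
    Filter.Tendsto
      (fun ρ : ℝ => ∫ t : ℝ,
        ‖Mφ t - ∫ u in Set.Ioo (1 / ρ) ρ,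
            φ u * Complex.exp (((c : ℂ) + Complex.I * t - 1) * Real.log u)‖ ^ 2)
      Filter.atTop (nhds 0)

/-- The Mellin transform evaluated on the line `c + iℝ` (for `p = 1`). -/
def mellinAt (c : ℝ) (φ : ℝ → ℂ) (t : ℝ) : ℂ :=
  mellin φ ((c : ℂ) + Complex.I * t)

end

section AuxProofs

open MeasureTheory Complex Filter Topology Set
open scoped ENNReal

/-! ### Polar-analytic functions become holomorphic after the log substitution -/

lemma iota_eq' (w : ℂ) :
    ((Real.exp w.re : ℝ) : ℂ) * Complex.exp (Complex.I * (w.im : ℂ)) = Complex.exp w := by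
  rw [Complex.ofReal_exp, ← Complex.exp_add]
  congr 1
  rw [mul_comm Complex.I]
  exact (Complex.re_add_im w).symm ▸ rfl

lemma diffOn_g {a : ℝ} {f : ℝ × ℝ → ℂ} (h : PolarAnalyticOn f (Hstrip a)) :
    DifferentiableOn ℂ (fun w : ℂ => f (Real.exp w.re, w.im)) {w : ℂ | |w.im| < a} := by
  intro w₀ hw₀
  set p : ℝ × ℝ := (Real.exp w₀.re, w₀.im) with hp
  have hpD : p ∈ Hstrip a := ⟨Real.exp_pos _, hw₀⟩
  obtain ⟨L, hL⟩ := h p hpD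
  set ι : ℂ → ℝ × ℝ := fun w => (Real.exp w.re, w.im) with hι
  have hιcont : Continuous ι := by
    exact (Real.continuous_exp.comp Complex.continuous_re).prodMk Complex.continuous_im
  have hιinj : Function.Injective ι := by
    intro x y hxy
    have h1 : Real.exp x.re = Real.exp y.re := congrArg Prod.fst hxy
    have h2 : x.im = y.im := congrArg Prod.snd hxy
    exact Complex.ext (Real.exp_injective h1) h2
  have hten : Filter.Tendsto ι (𝓝[≠] w₀) (nhdsWithin p (Hstrip a \ {p})) := by
    apply tendsto_nhdsWithin_of_tendsto_nhds_of_eventually_within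
    · exact (hιcont.tendsto w₀).mono_left nhdsWithin_le_nhds
    · have hopen : ∀ᶠ w in 𝓝 w₀, |(w : ℂ).im| < a := by
        have : Continuous fun w : ℂ => |w.im| := Complex.continuous_im.abs
        exact this.continuousAt.eventually_lt continuousAt_const hw₀
      filter_upwards [eventually_nhdsWithin_of_eventually_nhds hopen,
        self_mem_nhdsWithin] with w hw hw'
      refine ⟨⟨Real.exp_pos _, hw⟩, ?_⟩
      simp only [mem_singleton_iff]
      intro hc
      exact hw' (hιinj hc)
  have hQ : Filter.Tendsto
      (fun w : ℂ => (f (ι w) - f p) / (Complex.exp w - Complex.exp w₀)) (𝓝[≠] w₀) (𝓝 L) := by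
    have := hL.comp hten
    refine this.congr (fun w => ?_)
    simp only [Function.comp]
    rw [iota_eq', iota_eq']
  have hE : Filter.Tendsto (slope Complex.exp w₀) (𝓝[≠] w₀) (𝓝 (Complex.exp w₀)) :=
    hasDerivAt_iff_tendsto_slope.mp (Complex.hasDerivAt_exp w₀)
  have key : HasDerivAt (fun w : ℂ => f (Real.exp w.re, w.im)) (L * Complex.exp w₀) w₀ := by
    rw [hasDerivAt_iff_tendsto_slope]
    have hprod := hQ.mul hE
    refine hprod.congr' ?_
    have hball : ∀ᶠ w in 𝓝[≠] w₀, ‖w - w₀‖ < 1 := by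
      apply eventually_nhdsWithin_of_eventually_nhds
      filter_upwards [Metric.ball_mem_nhds w₀ one_pos] with w hw
      simpa [Metric.mem_ball, dist_eq_norm] using hw
    filter_upwards [hball, self_mem_nhdsWithin] with w hw hw'
    have hne : w ≠ w₀ := hw'
    have hexpne : Complex.exp w - Complex.exp w₀ ≠ 0 := by
      intro hc
      have : Complex.exp w = Complex.exp w₀ := by linear_combination hc
      rw [Complex.exp_eq_exp_iff_exists_int] at this
      obtain ⟨n, hn⟩ := this
      rcases eq_or_ne n 0 with h0 | h0
      · apply hne; rw [hn, h0]; simp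
      · have heq : w - w₀ = (((n : ℝ) * (2 * Real.pi) : ℝ) : ℂ) * Complex.I := by
          rw [hn]; push_cast; ring
        have hnorm : ‖w - w₀‖ = |(n : ℝ)| * (2 * Real.pi) := by
          rw [heq, norm_mul, Complex.norm_I, mul_one, Complex.norm_real, Real.norm_eq_abs,
            abs_mul, abs_of_pos (by positivity : (0:ℝ) < 2 * Real.pi)]
        have h1 : (1 : ℝ) ≤ |(n : ℝ)| := by
          rw [← Int.cast_abs, ← Int.cast_one, Int.cast_le]
          exact Int.one_le_abs h0
        have : (2 * Real.pi) ≤ ‖w - w₀‖ := by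
          rw [hnorm]
          nlinarith [Real.pi_pos]
        nlinarith [Real.pi_gt_three]
    rw [slope_def_field, slope_def_field]
    rw [div_mul_div_cancel₀]
    · exact hexpne
  exact key.differentiableAt.differentiableWithinAt

/-! ### Substitution `r = exp x` -/

section subst

variable {E : Type*} [NormedAddCommGroup E] [NormedSpace ℝ E]

lemma integrableOn_Ioi_comp_exp_iff (g : ℝ → E) :
    IntegrableOn g (Set.Ioi 0) ↔ Integrable (fun x => Real.exp x • g (Real.exp x)) := by
  have h := integrableOn_image_iff_integrableOn_abs_deriv_smul (f := Real.exp)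
    (f' := Real.exp) MeasurableSet.univ
    (fun x _ => (Real.hasDerivAt_exp x).hasDerivWithinAt) (Real.exp_injective.injOn) g
  rw [Set.image_univ, Real.range_exp] at h
  rw [h, integrableOn_univ]
  constructor <;> intro hh <;> refine hh.congr (Filter.Eventually.of_forall fun x => ?_) <;>
    simp [abs_of_pos (Real.exp_pos x)]

lemma integral_Ioi_comp_exp (g : ℝ → E) :
    ∫ r in Set.Ioi (0:ℝ), g r = ∫ x : ℝ, Real.exp x • g (Real.exp x) := by
  have h := integral_image_eq_integral_abs_deriv_smul (f := Real.exp)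
    (f' := Real.exp) MeasurableSet.univ
    (fun x _ => (Real.hasDerivAt_exp x).hasDerivWithinAt) (Real.exp_injective.injOn) g
  rw [Set.image_univ, Real.range_exp, Measure.restrict_univ] at h
  rw [h]
  refine integral_congr_ae (Filter.Eventually.of_forall fun x => ?_)
  simp [abs_of_pos (Real.exp_pos x)]

end subst

lemma cpow_exp_eq (x : ℝ) (w : ℂ) :
    ((Real.exp x : ℝ) : ℂ) ^ w = Complex.exp (x * w) := by
  rw [Complex.ofReal_exp, Complex.cpow_def_of_ne_zero (Complex.exp_ne_zero _),
    Complex.log_exp] <;> simp [Real.pi_pos, Real.pi_nonneg]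

lemma smul_cpow_eq (x : ℝ) (s : ℂ) (z : ℂ) :
    Real.exp x • (((Real.exp x : ℝ) : ℂ) ^ (s - 1) • z) = Complex.exp (s * x) * z := by
  rw [cpow_exp_eq, smul_eq_mul, Complex.real_smul, Complex.ofReal_exp, ← mul_assoc,
    ← Complex.exp_add]
  ring_nf

lemma norm_key (c : ℝ) (φ : ℝ → ℂ) (x : ℝ) :
    Real.exp x • (‖φ (Real.exp x)‖ * (Real.exp x) ^ (c - 1))
      = Real.exp (c * x) * ‖φ (Real.exp x)‖ := by
  rw [smul_eq_mul, ← Real.exp_mul, ← mul_assoc, mul_comm (Real.exp x), mul_assoc,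
    ← Real.exp_add]
  rw [mul_comm ‖φ (Real.exp x)‖]
  congr 2
  ring

lemma transfer_norm {c : ℝ} {φ : ℝ → ℂ} (hX : MemX c 1 φ) :
    Integrable (fun x : ℝ => Real.exp (c * x) * ‖φ (Real.exp x)‖) ∧
    ∫ x : ℝ, Real.exp (c * x) * ‖φ (Real.exp x)‖ = Xnorm c 1 φ := by
  have h2' : IntegrableOn (fun r : ℝ => ‖φ r‖ * r ^ (c - 1)) (Set.Ioi 0) := by
    have := hX.2
    simp only [Real.rpow_one, mul_one] at this
    exact this
  constructor
  · have := (integrableOn_Ioi_comp_exp_iff (fun r => ‖φ r‖ * r ^ (c - 1))).mp h2'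
    exact this.congr (Filter.Eventually.of_forall fun x => norm_key c φ x)
  · have h := integral_Ioi_comp_exp (fun r => ‖φ r‖ * r ^ (c - 1))
    rw [Xnorm]
    simp only [Real.rpow_one, mul_one]
    have h11 : (1:ℝ)/1 = 1 := by norm_num
    rw [h, h11, Real.rpow_one]
    exact (integral_congr_ae (Filter.Eventually.of_forall fun x => norm_key c φ x)).symm

lemma transfer_mellin {c : ℝ} {φ : ℝ → ℂ} (hX : MemX c 1 φ) (s : ℂ) (hs : s.re = c) :
    Integrable (fun x : ℝ => Complex.exp (s * x) * φ (Real.exp x)) ∧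
    mellin φ s = ∫ x : ℝ, Complex.exp (s * x) * φ (Real.exp x) := by
  have h2' : IntegrableOn (fun r : ℝ => ‖φ r‖ * r ^ (c - 1)) (Set.Ioi 0) := by
    have := hX.2; simp only [Real.rpow_one, mul_one] at this; exact this
  have hmeas : AEStronglyMeasurable (fun r : ℝ => (r : ℂ) ^ (s - 1) • φ r)
      (volume.restrict (Set.Ioi 0)) := by
    refine AEStronglyMeasurable.smul (𝕜 := ℂ) ?_ hX.1
    refine (ContinuousOn.aestronglyMeasurable ?_ measurableSet_Ioi)
    intro r hr
    exact (Complex.continuousAt_ofReal_cpow_const r (s-1)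
      (Or.inr (by exact_mod_cast ne_of_gt hr))).continuousWithinAt
  have hint : IntegrableOn (fun r : ℝ => (r : ℂ) ^ (s - 1) • φ r) (Set.Ioi 0) := by
    refine ⟨hmeas, ?_⟩
    refine HasFiniteIntegral.mono' h2'.2 ?_
    filter_upwards [ae_restrict_mem measurableSet_Ioi] with r hr
    rw [smul_eq_mul, norm_mul]
    have : ‖(r : ℂ) ^ (s - 1)‖ = r ^ (c - 1) := by
      rw [Complex.norm_cpow_eq_rpow_re_of_pos hr]
      congr 1
      simp [hs]
    rw [this, mul_comm]
  constructor
  · have := (integrableOn_Ioi_comp_exp_iff (fun r => (r : ℂ) ^ (s - 1) • φ r)).mp hint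
    exact this.congr (Filter.Eventually.of_forall fun x => smul_cpow_eq x s (φ (Real.exp x)))
  · rw [mellin]
    have h := integral_Ioi_comp_exp (fun r => (r : ℂ) ^ (s - 1) • φ r)
    rw [h]
    exact integral_congr_ae (Filter.Eventually.of_forall fun x => smul_cpow_eq x s (φ (Real.exp x)))

/-! ### Hardy norm facts -/

lemma Xnorm_one_nonneg (c : ℝ) (φ : ℝ → ℂ) : 0 ≤ Xnorm c 1 φ := by
  rw [Xnorm]
  apply Real.rpow_nonneg
  apply setIntegral_nonneg measurableSet_Ioi
  intro r hr
  exact mul_nonneg (Real.rpow_nonneg (norm_nonneg _) _) (Real.rpow_nonneg (le_of_lt hr) _)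

lemma hardyVals_mem_simp {c a : ℝ} (f : ℝ × ℝ → ℂ) {θ : ℝ} (hθ0 : 0 < θ) (hθa : θ < a) :
    (Xnorm c 1 (fun r => f (r, θ)) + Xnorm c 1 (fun r => f (r, -θ))) / 2
      ∈ hardyVals c 1 a f := by
  refine ⟨θ, hθ0, hθa, ?_⟩
  rw [Real.rpow_one, Real.rpow_one]
  norm_num

lemma hardyNorm_nonneg {c a : ℝ} (ha : 0 < a) {f : ℝ × ℝ → ℂ} (hf : MemHardy c 1 a f) :
    0 ≤ HardyNorm c 1 a f := by
  have hmem := hardyVals_mem_simp (c := c) (a := a) f (half_pos ha) (half_lt_self ha)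
  refine le_trans ?_ (le_csSup hf.2.2 hmem)
  have := Xnorm_one_nonneg c (fun r => f (r, a/2))
  have := Xnorm_one_nonneg c (fun r => f (r, -(a/2)))
  linarith

lemma N_le_twoM {c a : ℝ} (ha : 0 < a) {f : ℝ × ℝ → ℂ} (hf : MemHardy c 1 a f)
    {y : ℝ} (hy0 : y ≠ 0) (hya : |y| < a) :
    Xnorm c 1 (fun r => f (r, y)) ≤ 2 * HardyNorm c 1 a f := by
  rw [HardyNorm]
  have hθ : 0 < |y| := abs_pos.mpr hy0
  have hmem := hardyVals_mem_simp (c := c) (a := a) f hθ hya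
  have hle := le_csSup hf.2.2 hmem
  have h1 := Xnorm_one_nonneg c (fun r => f (r, |y|))
  have h2 := Xnorm_one_nonneg c (fun r => f (r, -|y|))
  rcases abs_cases y with ⟨hy, _⟩ | ⟨hy, _⟩
  · rw [hy] at hle h1 h2
    linarith
  · rw [hy] at hle h1 h2
    simp only [neg_neg] at hle h2
    linarith

end AuxProofs

section AuxProofs2

open MeasureTheory Complex Filter Topology Set
open scoped ENNReal

lemma contour_shift {c a : ℝ} (ha : 0 < a) {f : ℝ × ℝ → ℂ} (hf : MemHardy c 1 a f)
    (t u : ℝ) (hu0 : u ≠ 0) (hua : |u| < a) :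
    ∫ x : ℝ, Complex.exp (((c:ℂ) + Complex.I * t) * x) * f (Real.exp x, 0)
      = ∫ x : ℝ, Complex.exp (((c:ℂ) + Complex.I * t) * ((x:ℂ) + u * Complex.I))
          * f (Real.exp x, u) := by
  set s : ℂ := (c:ℂ) + Complex.I * t with hs
  have hsre : s.re = c := by simp [hs]
  set g : ℂ → ℂ := fun w => f (Real.exp w.re, w.im) with hg
  set F : ℂ → ℂ := fun w => g w * Complex.exp (s * w) with hF
  have hgd : DifferentiableOn ℂ g {w : ℂ | |w.im| < a} := diffOn_g hf.1
  have hFd : DifferentiableOn ℂ F {w : ℂ | |w.im| < a} :=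
    hgd.mul ((Complex.differentiable_exp.comp
      ((differentiable_const s).mul differentiable_id)).differentiableOn)
  have hX0 : MemX c 1 (fun r => f (r, 0)) := hf.2.1 0 (by simpa using ha)
  have hXu : MemX c 1 (fun r => f (r, u)) := hf.2.1 u hua
  have hI0 : Integrable (fun x : ℝ => Complex.exp (s * x) * f (Real.exp x, 0)) :=
    (transfer_mellin hX0 s hsre).1
  have hIu' : Integrable (fun x : ℝ => Complex.exp (s * x) * f (Real.exp x, u)) :=
    (transfer_mellin hXu s hsre).1
  have hsplit : ∀ x : ℝ, Complex.exp (s * ((x:ℂ) + u * Complex.I)) * f (Real.exp x, u)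
      = Complex.exp (s * (u * Complex.I)) * (Complex.exp (s * x) * f (Real.exp x, u)) := by
    intro x
    rw [← mul_assoc, ← Complex.exp_add]
    ring_nf
  have hIu : Integrable
      (fun x : ℝ => Complex.exp (s * ((x:ℂ) + u * Complex.I)) * f (Real.exp x, u)) :=
    (hIu'.const_mul (Complex.exp (s * (u * Complex.I)))).congr
      (Filter.Eventually.of_forall fun x => (hsplit x).symm)
  have hFxy : ∀ x y : ℝ, F ((x:ℂ) + (y:ℂ) * Complex.I)
      = f (Real.exp x, y) * Complex.exp (s * ((x:ℂ) + (y:ℂ) * Complex.I)) := by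
    intro x y
    simp [hF, hg]
  have hF0 : ∀ x : ℝ, F ((x:ℝ):ℂ) = Complex.exp (s * x) * f (Real.exp x, 0) := by
    intro x
    simp [hF, hg, mul_comm]
  -- integrability in the F-form
  have hI0F : Integrable (fun x : ℝ => F ((x:ℝ):ℂ)) :=
    hI0.congr (Filter.Eventually.of_forall fun x => (hF0 x).symm)
  have hIuF : Integrable (fun x : ℝ => F ((x:ℂ) + (u:ℂ) * Complex.I)) :=
    hIu.congr (Filter.Eventually.of_forall fun x => by simp only [hFxy x u]; ring)
  -- clamped second coordinate, to obtain a globally continuous auxiliary function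
  set lo : ℝ := min 0 u with hlo
  set hi : ℝ := max 0 u with hhi
  have hlohi : lo ≤ hi := min_le_max
  set proj : ℝ → ℝ := fun y => max lo (min y hi) with hproj
  have hprojmem : ∀ y, lo ≤ proj y ∧ proj y ≤ hi := fun y =>
    ⟨le_max_left _ _, max_le hlohi (min_le_right _ _)⟩
  have hprojeq : ∀ y, lo ≤ y → y ≤ hi → proj y = y := by
    intro y h1 h2
    rw [hproj]
    simp only []
    rw [min_eq_left h2, max_eq_right h1]
  have habs_le : ∀ y, lo ≤ y → y ≤ hi → |y| ≤ |u| := by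
    intro y h1 h2
    have hl : -|u| ≤ lo := by
      apply le_min (neg_nonpos_of_nonneg (abs_nonneg u)) (neg_abs_le u)
    have hh : hi ≤ |u| := max_le (abs_nonneg u) (le_abs_self u)
    rw [abs_le]
    exact ⟨le_trans hl h1, le_trans h2 hh⟩
  have hstrip_proj : ∀ y : ℝ, |proj y| < a := fun y =>
    lt_of_le_of_lt (habs_le _ (hprojmem y).1 (hprojmem y).2) hua
  set Φ : ℝ × ℝ → ℂ := fun p => F ((p.1 : ℂ) + ((proj p.2 : ℝ) : ℂ) * Complex.I) with hΦ
  have hprojc : Continuous proj :=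
    continuous_const.max (continuous_id.min continuous_const)
  have hρ : Continuous fun p : ℝ × ℝ => ((p.1 : ℂ) + ((proj p.2 : ℝ) : ℂ) * Complex.I) := by
    exact (Complex.continuous_ofReal.comp continuous_fst).add
      ((Complex.continuous_ofReal.comp (hprojc.comp continuous_snd)).mul continuous_const)
  have hΦc : Continuous Φ := by
    refine hFd.continuousOn.comp_continuous hρ fun p => ?_
    show |(((p.1 : ℂ) + ((proj p.2 : ℝ) : ℂ) * Complex.I)).im| < a
    simpa using hstrip_proj p.2
  have hΦm : Measurable fun p : ℝ × ℝ => (‖Φ p‖₊ : ℝ≥0∞) :=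
    hΦc.measurable.nnnorm.coe_nnreal_ennreal
  set h : ℝ → ℝ≥0∞ := fun x => ∫⁻ y in Set.uIoc 0 u, (‖Φ (x, y)‖₊ : ℝ≥0∞) with hh'
  have hmeas_h : Measurable h := Measurable.lintegral_prod_right' hΦm
  set M := HardyNorm c 1 a f with hM
  have hM0 : 0 ≤ M := hardyNorm_nonneg ha hf
  set K : ℝ := Real.exp (|t| * |u|) * (2 * M) with hK
  have hIoc : Set.uIoc 0 u = Set.Ioc lo hi := rfl
  have hinner : ∀ y : ℝ, y ≠ 0 → y ∈ Set.uIoc 0 u →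
      (∫⁻ x : ℝ, (‖Φ (x, y)‖₊ : ℝ≥0∞)) ≤ ENNReal.ofReal K := by
    intro y hy0 hymem
    rw [hIoc] at hymem
    have hy1 : lo ≤ y := le_of_lt hymem.1
    have hy2 : y ≤ hi := hymem.2
    have hya : |y| < a := lt_of_le_of_lt (habs_le y hy1 hy2) hua
    have hXy : MemX c 1 (fun r => f (r, y)) := hf.2.1 y hya
    have hNy : Xnorm c 1 (fun r => f (r, y)) ≤ 2 * M := N_le_twoM ha hf hy0 hya
    have hpy : proj y = y := hprojeq y hy1 hy2
    have hre : ∀ x : ℝ, (s * ((x:ℂ) + (y:ℂ) * Complex.I)).re = c * x - t * y := by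
      intro x
      simp only [hs, Complex.add_re, Complex.add_im, Complex.mul_re, Complex.mul_im,
        Complex.add_im, Complex.ofReal_re, Complex.ofReal_im, Complex.I_re, Complex.I_im,
        Complex.mul_I_re, Complex.mul_I_im]
      ring
    have hval : ∀ x : ℝ, (‖Φ (x, y)‖₊ : ℝ≥0∞)
        = ENNReal.ofReal (Real.exp (-(t*y)) * (Real.exp (c * x) * ‖f (Real.exp x, y)‖)) := by
      intro x
      have hnormF : ‖F ((x:ℂ) + (y:ℂ) * Complex.I)‖
          = Real.exp (c * x - t * y) * ‖f (Real.exp x, y)‖ := by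
        rw [hFxy x y, norm_mul]
        rw [show ‖Complex.exp (s * ((x:ℂ) + (y:ℂ) * Complex.I))‖ = Real.exp (c * x - t * y) from
          by rw [Complex.norm_exp, hre x]]
        ring
      have : Φ (x, y) = F ((x:ℂ) + (y:ℂ) * Complex.I) := by rw [hΦ]; simp [hpy]
      rw [this, ← enorm_eq_nnnorm, ← ofReal_norm, hnormF, ← mul_assoc, ← Real.exp_add]
      congr 2
      ring
    have hInt : Integrable (fun x : ℝ => Real.exp (c * x) * ‖f (Real.exp x, y)‖) :=
      (transfer_norm hXy).1
    calc (∫⁻ x : ℝ, (‖Φ (x, y)‖₊ : ℝ≥0∞))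
        = ∫⁻ x : ℝ, ENNReal.ofReal
            (Real.exp (-(t*y)) * (Real.exp (c * x) * ‖f (Real.exp x, y)‖)) :=
          lintegral_congr hval
      _ = ENNReal.ofReal (∫ x : ℝ,
            Real.exp (-(t*y)) * (Real.exp (c * x) * ‖f (Real.exp x, y)‖)) :=
          (ofReal_integral_eq_lintegral_ofReal (hInt.const_mul _)
            (Filter.Eventually.of_forall fun x => by positivity)).symm
      _ = ENNReal.ofReal (Real.exp (-(t*y)) * Xnorm c 1 (fun r => f (r, y))) := by
          rw [integral_const_mul, (transfer_norm hXy).2]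
      _ ≤ ENNReal.ofReal K := by
          apply ENNReal.ofReal_le_ofReal
          have he : Real.exp (-(t*y)) ≤ Real.exp (|t| * |u|) := by
            apply Real.exp_le_exp.mpr
            calc -(t*y) ≤ |t*y| := neg_le_abs _
              _ = |t| * |y| := abs_mul t y
              _ ≤ |t| * |u| := by
                  exact mul_le_mul_of_nonneg_left (habs_le y hy1 hy2) (abs_nonneg t)
          exact mul_le_mul he hNy (Xnorm_one_nonneg _ _) (Real.exp_pos _).le
  have hmuIoc : volume (Set.uIoc 0 u) ≠ ⊤ := by
    rw [hIoc, Real.volume_Ioc]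
    exact ENNReal.ofReal_ne_top
  have hJ : ∫⁻ x : ℝ, h x ≠ ⊤ := by
    have hswap : ∫⁻ x : ℝ, h x
        = ∫⁻ y in Set.uIoc 0 u, ∫⁻ x : ℝ, (‖Φ (x, y)‖₊ : ℝ≥0∞) := by
      exact lintegral_lintegral_swap hΦm.aemeasurable
    rw [hswap]
    have h0ae : ∀ᵐ y : ℝ ∂(volume.restrict (Set.uIoc 0 u)), y ≠ 0 := by
      refine ae_restrict_of_ae ?_
      rw [ae_iff]
      have : {y : ℝ | ¬ y ≠ 0} = {0} := by ext y; simp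
      rw [this]
      exact measure_singleton 0
    have hb : ∫⁻ y in Set.uIoc 0 u, (∫⁻ x : ℝ, (‖Φ (x, y)‖₊ : ℝ≥0∞))
        ≤ ∫⁻ _ in Set.uIoc 0 u, ENNReal.ofReal K := by
      refine lintegral_mono_ae ?_
      filter_upwards [h0ae, ae_restrict_mem measurableSet_uIoc] with y hy0 hymem
      exact hinner y hy0 hymem
    refine ne_top_of_le_ne_top ?_ hb
    rw [setLIntegral_const]
    exact ENNReal.mul_ne_top ENNReal.ofReal_ne_top hmuIoc
  have hfreq : ∀ ε : ℝ, 0 < ε →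
      ∃ᶠ R in atTop, h R < ENNReal.ofReal ε ∧ h (-R) < ENNReal.ofReal ε := by
    intro ε hε
    by_contra hcon
    rw [Filter.not_frequently] at hcon
    have hev : ∀ᶠ R in atTop, ENNReal.ofReal ε ≤ h R + h (-R) := by
      filter_upwards [hcon] with R hR
      rw [not_and_or, not_lt, not_lt] at hR
      rcases hR with h1 | h1
      · exact le_trans h1 le_self_add
      · exact le_trans h1 le_add_self
    obtain ⟨R₀, hR₀⟩ := Filter.eventually_atTop.mp hev
    have hWm : Measurable fun R : ℝ => h R + h (-R) :=
      hmeas_h.add (hmeas_h.comp measurable_neg)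
    have hinfty : (⊤ : ℝ≥0∞) ≤ ∫⁻ R in Set.Ici R₀, (h R + h (-R)) := by
      have h1 : ∫⁻ _ in Set.Ici R₀, ENNReal.ofReal ε ≤ ∫⁻ R in Set.Ici R₀, (h R + h (-R)) :=
        setLIntegral_mono hWm fun x hx => hR₀ x hx
      rwa [setLIntegral_const, Real.volume_Ici,
        ENNReal.mul_top ((ENNReal.ofReal_pos.mpr hε).ne')] at h1
    have hfin : ∫⁻ R in Set.Ici R₀, (h R + h (-R)) ≠ ⊤ := by
      have hle : ∫⁻ R in Set.Ici R₀, (h R + h (-R)) ≤ ∫⁻ R : ℝ, (h R + h (-R)) :=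
        lintegral_mono' Measure.restrict_le_self le_rfl
      have hadd : ∫⁻ R : ℝ, (h R + h (-R)) = (∫⁻ R : ℝ, h R) + ∫⁻ R : ℝ, h (-R) :=
        lintegral_add_left hmeas_h _
      have hneg : ∫⁻ R : ℝ, h (-R) = ∫⁻ R : ℝ, h R :=
        (Measure.measurePreserving_neg volume).lintegral_comp hmeas_h
      rw [hadd, hneg] at hle
      exact ne_top_of_le_ne_top (ENNReal.add_ne_top.mpr ⟨hJ, hJ⟩) hle
    exact hfin (top_le_iff.mp hinfty)
  -- vertical integrals
  set V : ℝ → ℂ := fun x₀ => ∫ y in (0:ℝ)..u, F ((x₀:ℂ) + (y:ℂ) * Complex.I) with hV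
  have hnormV : ∀ x₀ : ℝ, ‖V x₀‖ ≤ (h x₀).toReal := by
    intro x₀
    have h1 : ‖V x₀‖ ≤ ∫ y in Set.uIoc 0 u, ‖F ((x₀:ℂ) + (y:ℂ) * Complex.I)‖ :=
      intervalIntegral.norm_integral_le_integral_norm_uIoc
    have h2 : ∫ y in Set.uIoc 0 u, ‖F ((x₀:ℂ) + (y:ℂ) * Complex.I)‖
        = ∫ y in Set.uIoc 0 u, ‖Φ (x₀, y)‖ := by
      refine setIntegral_congr_fun measurableSet_uIoc fun y hy => ?_
      rw [hIoc] at hy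
      have : proj y = y := hprojeq y (le_of_lt hy.1) hy.2
      rw [hΦ]
      simp [this]
    have h3 : ∫ y in Set.uIoc 0 u, ‖Φ (x₀, y)‖ = (h x₀).toReal := by
      have hcont : Continuous fun y : ℝ => ‖Φ (x₀, y)‖ :=
        (hΦc.comp (Continuous.prodMk_right x₀)).norm
      rw [integral_eq_lintegral_of_nonneg_ae
        (Filter.Eventually.of_forall fun y => norm_nonneg _) hcont.aestronglyMeasurable]
      congr 1
      exact lintegral_congr fun y => by rw [← enorm_eq_nnnorm, ofReal_norm]
    rw [h2, h3] at h1
    exact h1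
  -- the rectangle identity
  have hrect : ∀ R : ℝ,
      (∫ x in (-R)..R, F ((x:ℝ):ℂ)) - (∫ x in (-R)..R, F ((x:ℂ) + (u:ℂ) * Complex.I))
        = Complex.I • V (-R) - Complex.I • V R := by
    intro R
    have hdiff : DifferentiableOn ℂ F
        ((Set.uIcc (((-R : ℝ):ℂ)).re (((R:ℝ):ℂ) + (u:ℂ) * Complex.I).re) ×ℂ
          (Set.uIcc (((-R : ℝ):ℂ)).im (((R:ℝ):ℂ) + (u:ℂ) * Complex.I).im)) := by
      refine hFd.mono ?_
      intro w' hw'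
      rw [Complex.mem_reProdIm] at hw'
      have him := hw'.2
      have h0 : (((-R : ℝ):ℂ)).im = 0 := by simp
      have h1 : ((((R:ℝ):ℂ)) + (u:ℂ) * Complex.I).im = u := by simp
      rw [h0, h1] at him
      show |w'.im| < a
      rcases Set.mem_uIcc.mp him with ⟨hh1, hh2⟩ | ⟨hh1, hh2⟩ <;>
        refine lt_of_le_of_lt (abs_le.mpr ⟨?_, ?_⟩) hua <;>
          linarith [neg_abs_le u, le_abs_self u, abs_nonneg u]
    have key := Complex.integral_boundary_rect_eq_zero_of_differentiableOn F
      (((-R : ℝ):ℂ)) (((R:ℝ):ℂ) + (u:ℂ) * Complex.I) hdiff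
    simp only [Complex.ofReal_neg, Complex.neg_re, Complex.neg_im, Complex.add_re,
      Complex.add_im, Complex.ofReal_re, Complex.ofReal_im, Complex.mul_I_re, Complex.mul_I_im,
      neg_zero, neg_neg, add_zero, zero_add, Complex.ofReal_zero, zero_mul] at key
    rw [hV]
    simp only [Complex.ofReal_neg]
    linear_combination key
  -- convergence of the horizontal integrals
  have hAt : Tendsto (fun R => ∫ x in (-R)..R, F ((x:ℝ):ℂ)) atTop
      (𝓝 (∫ x : ℝ, F ((x:ℝ):ℂ))) :=
    intervalIntegral_tendsto_integral hI0F tendsto_neg_atTop_atBot tendsto_id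
  have hBt : Tendsto (fun R => ∫ x in (-R)..R, F ((x:ℂ) + (u:ℂ) * Complex.I)) atTop
      (𝓝 (∫ x : ℝ, F ((x:ℂ) + (u:ℂ) * Complex.I))) :=
    intervalIntegral_tendsto_integral hIuF tendsto_neg_atTop_atBot tendsto_id
  have hlim : Tendsto
      (fun R => (∫ x in (-R)..R, F ((x:ℝ):ℂ)) - ∫ x in (-R)..R, F ((x:ℂ) + (u:ℂ) * Complex.I))
      atTop (𝓝 ((∫ x : ℝ, F ((x:ℝ):ℂ)) - ∫ x : ℝ, F ((x:ℂ) + (u:ℂ) * Complex.I))) :=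
    hAt.sub hBt
  have hzero : (∫ x : ℝ, F ((x:ℝ):ℂ)) = ∫ x : ℝ, F ((x:ℂ) + (u:ℂ) * Complex.I) := by
    set L : ℂ := (∫ x : ℝ, F ((x:ℝ):ℂ)) - ∫ x : ℝ, F ((x:ℂ) + (u:ℂ) * Complex.I) with hL
    have hLle : ∀ ε : ℝ, 0 < ε → ‖L‖ ≤ 2 * ε := by
      intro ε hε
      by_contra hgt
      push_neg at hgt
      have hev : ∀ᶠ R in atTop, 2 * ε
          < ‖(∫ x in (-R)..R, F ((x:ℝ):ℂ)) - ∫ x in (-R)..R, F ((x:ℂ) + (u:ℂ) * Complex.I)‖ :=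
        (hlim.norm).eventually (eventually_gt_nhds hgt)
      obtain ⟨R, hR1, hR2⟩ := ((hfreq ε hε).and_eventually hev).exists
      have hb1 : ‖V (-R)‖ ≤ ε :=
        le_trans (hnormV _) (ENNReal.toReal_le_of_le_ofReal hε.le hR1.2.le)
      have hb2 : ‖V R‖ ≤ ε :=
        le_trans (hnormV _) (ENNReal.toReal_le_of_le_ofReal hε.le hR1.1.le)
      have hle2 : ‖(∫ x in (-R)..R, F ((x:ℝ):ℂ))
          - ∫ x in (-R)..R, F ((x:ℂ) + (u:ℂ) * Complex.I)‖ ≤ 2 * ε := by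
        rw [hrect R]
        calc ‖Complex.I • V (-R) - Complex.I • V R‖
            ≤ ‖Complex.I • V (-R)‖ + ‖Complex.I • V R‖ := norm_sub_le _ _
          _ = ‖V (-R)‖ + ‖V R‖ := by
              rw [norm_smul, norm_smul, Complex.norm_I, one_mul, one_mul]
          _ ≤ 2 * ε := by linarith
      linarith
    have hnorm0 : ‖L‖ = 0 := by
      by_contra hne
      have hpos : 0 < ‖L‖ := lt_of_le_of_ne (norm_nonneg _) (Ne.symm hne)
      have := hLle (‖L‖/4) (by linarith)
      linarith
    exact sub_eq_zero.mp (norm_eq_zero.mp hnorm0)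
  calc ∫ x : ℝ, Complex.exp (s * x) * f (Real.exp x, 0)
      = ∫ x : ℝ, F ((x:ℝ):ℂ) :=
        integral_congr_ae (Filter.Eventually.of_forall fun x => (hF0 x).symm)
    _ = ∫ x : ℝ, F ((x:ℂ) + (u:ℂ) * Complex.I) := hzero
    _ = ∫ x : ℝ, Complex.exp (s * ((x:ℂ) + u * Complex.I)) * f (Real.exp x, u) :=
        integral_congr_ae (Filter.Eventually.of_forall fun x => by simp only [hFxy x u]; ring)

end AuxProofs2

section AuxProofs3

open MeasureTheory Complex Filter Topology Set
open scoped ENNReal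

lemma mellin_pointwise_bound {c a : ℝ} (ha : 0 < a) {f : ℝ × ℝ → ℂ} (hf : MemHardy c 1 a f)
    (t θ : ℝ) (hθ0 : 0 < θ) (hθa : θ < a) :
    ‖mellinAt c (fun r => f (r, 0)) t‖ ≤ 2 * HardyNorm c 1 a f * Real.exp (-θ * |t|) := by
  set s : ℂ := (c:ℂ) + Complex.I * t with hs
  have hsre : s.re = c := by simp [hs]
  set u : ℝ := if 0 ≤ t then θ else -θ with hu
  have habs : |u| = θ := by
    rcases le_or_gt 0 t with h | h
    · rw [hu, if_pos h, abs_of_pos hθ0]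
    · rw [hu, if_neg (not_le.mpr h), abs_neg, abs_of_pos hθ0]
  have hu0 : u ≠ 0 := fun hc => by
    rw [hc] at habs; simp at habs; exact absurd habs.symm (ne_of_gt hθ0)
  have hua : |u| < a := habs ▸ hθa
  have htu : t * u = |t| * θ := by
    rcases le_or_gt 0 t with h | h
    · rw [hu, if_pos h, _root_.abs_of_nonneg h]
    · rw [hu, if_neg (not_le.mpr h), _root_.abs_of_neg h]; ring
  have hX0 : MemX c 1 (fun r => f (r, 0)) := hf.2.1 0 (by simpa using ha)
  have hXu : MemX c 1 (fun r => f (r, u)) := hf.2.1 u hua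
  have h1 : mellinAt c (fun r => f (r, 0)) t
      = ∫ x : ℝ, Complex.exp (s * x) * f (Real.exp x, 0) := by
    rw [mellinAt, ← hs]
    exact (transfer_mellin hX0 s hsre).2
  have h2 : ∫ x : ℝ, Complex.exp (s * x) * f (Real.exp x, 0)
      = ∫ x : ℝ, Complex.exp (s * ((x:ℂ) + u * Complex.I)) * f (Real.exp x, u) := by
    rw [hs]
    exact contour_shift ha hf t u hu0 hua
  rw [h1, h2]
  have hre : ∀ x : ℝ, (s * ((x:ℂ) + (u:ℂ) * Complex.I)).re = c * x - t * u := by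
    intro x
    simp only [hs, Complex.add_re, Complex.add_im, Complex.mul_re, Complex.mul_im,
      Complex.ofReal_re, Complex.ofReal_im, Complex.I_re, Complex.I_im,
      Complex.mul_I_re, Complex.mul_I_im]
    ring
  have hnorm_int : ∀ x : ℝ, ‖Complex.exp (s * ((x:ℂ) + u * Complex.I)) * f (Real.exp x, u)‖
      = Real.exp (-(t*u)) * (Real.exp (c*x) * ‖f (Real.exp x, u)‖) := by
    intro x
    rw [norm_mul]
    rw [show ‖Complex.exp (s * ((x:ℂ) + (u:ℂ) * Complex.I))‖ = Real.exp (c * x - t * u) from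
      by rw [Complex.norm_exp, hre x]]
    rw [show c * x - t * u = -(t*u) + c*x by ring, Real.exp_add]
    ring
  calc ‖∫ x : ℝ, Complex.exp (s * ((x:ℂ) + u * Complex.I)) * f (Real.exp x, u)‖
      ≤ ∫ x : ℝ, ‖Complex.exp (s * ((x:ℂ) + u * Complex.I)) * f (Real.exp x, u)‖ :=
        norm_integral_le_integral_norm _
    _ = ∫ x : ℝ, Real.exp (-(t*u)) * (Real.exp (c*x) * ‖f (Real.exp x, u)‖) :=
        integral_congr_ae (Filter.Eventually.of_forall hnorm_int)
    _ = Real.exp (-(t*u)) * Xnorm c 1 (fun r => f (r, u)) := by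
        rw [integral_const_mul, (transfer_norm hXu).2]
    _ ≤ Real.exp (-θ * |t|) * (2 * HardyNorm c 1 a f) := by
        refine mul_le_mul (le_of_eq ?_) (N_le_twoM ha hf hu0 hua)
          (Xnorm_one_nonneg _ _) (Real.exp_pos _).le
        rw [htu]; ring_nf
    _ = 2 * HardyNorm c 1 a f * Real.exp (-θ * |t|) := by ring

end AuxProofs3

/-- distance of `f ∈ H¹_c(ℍ_a)` from the Mellin–Bernstein class `𝓑¹_{c,σ}`:
`dist_q(f, 𝓑¹_{c,σ}) ≤ 2 ‖f‖_{H¹_c(ℍ_a)} (2/(aq))^{1/q} e^{-aσ}`. -/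
theorem hardy_distance_p1
    (c a σ q : ℝ) (ha : 0 < a) (hσ : 0 < σ) (hq : 1 ≤ q)
    (f : ℝ × ℝ → ℂ) (hf : MemHardy c 1 a f) :
    (∫⁻ t in {t : ℝ | σ ≤ |t|},
        ENNReal.ofReal (‖mellinAt c (fun r => f (r, 0)) t‖ ^ q)) ^ (1 / q)
      ≤ ENNReal.ofReal
          (2 * HardyNorm c 1 a f * (2 / (a * q)) ^ (1 / q) * Real.exp (-a * σ)) := by
  have hq0 : (0:ℝ) < q := lt_of_lt_of_le one_pos hq
  set M := HardyNorm c 1 a f with hM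
  have hM0 : 0 ≤ M := hardyNorm_nonneg ha hf
  have hkey : ∀ θ : ℝ, 0 < θ → θ < a →
      (∫⁻ t in {t : ℝ | σ ≤ |t|},
        ENNReal.ofReal (‖mellinAt c (fun r => f (r, 0)) t‖ ^ q)) ^ (1 / q)
        ≤ ENNReal.ofReal (2 * M * (2 / (θ * q)) ^ (1 / q) * Real.exp (-θ * σ)) := by
    intro θ hθ0 hθa
    set b : ℝ := θ * q with hb
    have hb0 : 0 < b := mul_pos hθ0 hq0
    have hpt : ∀ t : ℝ, ‖mellinAt c (fun r => f (r, 0)) t‖ ^ q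
        ≤ (2*M)^q * Real.exp (-b * |t|) := by
      intro t
      have h1 : ‖mellinAt c (fun r => f (r, 0)) t‖ ^ q
          ≤ (2 * M * Real.exp (-θ * |t|)) ^ q :=
        Real.rpow_le_rpow (norm_nonneg _) (mellin_pointwise_bound ha hf t θ hθ0 hθa) hq0.le
      refine h1.trans (le_of_eq ?_)
      rw [Real.mul_rpow (by positivity) (Real.exp_pos _).le, ← Real.exp_mul]
      congr 2
      rw [hb]; ring
    have hIoiVal : ∫ x in Set.Ioi σ, Real.exp (-b * x) = Real.exp (-b * σ) / b := by
      have hcont : ContinuousWithinAt (fun y : ℝ => -(Real.exp (-b * y) / b))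
          (Set.Ici σ) σ := by
        apply Continuous.continuousWithinAt
        continuity
      have hderiv : ∀ x ∈ Set.Ioi σ, HasDerivAt (fun y : ℝ => -(Real.exp (-b * y) / b))
          (Real.exp (-b * x)) x := by
        intro x _
        have hd1 : HasDerivAt (fun y : ℝ => -b * y) (-b) x := by
          simpa using (hasDerivAt_id x).const_mul (-b)
        have hd2 : HasDerivAt (fun y : ℝ => -(Real.exp (-b * y) / b))
            (-(Real.exp (-b * x) * -b / b)) x := (hd1.exp.div_const b).neg
        convert hd2 using 1
        field_simp
      have hint : IntegrableOn (fun x : ℝ => Real.exp (-b * x)) (Set.Ioi σ) :=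
        exp_neg_integrableOn_Ioi σ hb0
      have htd : Tendsto (fun y : ℝ => -(Real.exp (-b * y) / b)) atTop (𝓝 0) := by
        have h1 : Tendsto (fun y : ℝ => b * y) atTop atTop :=
          Tendsto.const_mul_atTop hb0 tendsto_id
        have h2 : Tendsto (fun y : ℝ => Real.exp (-(b * y))) atTop (𝓝 0) :=
          Real.tendsto_exp_neg_atTop_nhds_zero.comp h1
        have h3 : Tendsto (fun y : ℝ => -(Real.exp (-(b * y)) / b)) atTop (𝓝 (-((0:ℝ) / b))) :=
          (h2.div_const b).neg
        simp only [zero_div, neg_zero] at h3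
        refine h3.congr fun y => ?_
        ring_nf
      have := integral_Ioi_of_hasDerivAt_of_tendsto hcont hderiv hint htd
      rw [this]
      ring
    have hIciL : ∫⁻ t in Set.Ici σ, ENNReal.ofReal ((2*M)^q * Real.exp (-b * t))
        = ENNReal.ofReal ((2*M)^q * (Real.exp (-b * σ) / b)) := by
      have hint : IntegrableOn (fun t : ℝ => (2*M)^q * Real.exp (-b * t)) (Set.Ici σ) := by
        apply Integrable.const_mul
        exact Iff.mpr integrableOn_Ici_iff_integrableOn_Ioi (exp_neg_integrableOn_Ioi σ hb0)
      rw [← ofReal_integral_eq_lintegral_ofReal hint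
        (Filter.Eventually.of_forall fun t => by positivity)]
      congr 1
      rw [integral_const_mul, integral_Ici_eq_integral_Ioi, hIoiVal]
    have hIicL : ∫⁻ t in Set.Iic (-σ), ENNReal.ofReal ((2*M)^q * Real.exp (b * t))
        = ∫⁻ t in Set.Ici σ, ENNReal.ofReal ((2*M)^q * Real.exp (-b * t)) := by
      have hmp : MeasurePreserving (fun x : ℝ => -x) volume volume :=
        Measure.measurePreserving_neg volume
      have h1 := hmp.setLIntegral_comp_preimage_emb measurableEmbedding_neg
        (fun t => ENNReal.ofReal ((2*M)^q * Real.exp (b * t))) (Set.Iic (-σ))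
      have hpre : (fun x : ℝ => -x) ⁻¹' (Set.Iic (-σ)) = Set.Ici σ := by
        ext x
        simp
      rw [hpre] at h1
      rw [← h1]
      refine lintegral_congr fun x => ?_
      rw [show b * (-x) = -b * x by ring]
    have hSsub : {t : ℝ | σ ≤ |t|} ⊆ Set.Iic (-σ) ∪ Set.Ici σ := by
      intro t ht
      rcases le_abs.mp (by exact ht : σ ≤ |t|) with h | h
      · exact Or.inr h
      · exact Or.inl (mem_Iic.mpr (by linarith))
    have hIic' : ∫⁻ t in Set.Iic (-σ), ENNReal.ofReal ((2*M)^q * Real.exp (-b * |t|))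
        = ∫⁻ t in Set.Iic (-σ), ENNReal.ofReal ((2*M)^q * Real.exp (b * t)) := by
      refine setLIntegral_congr_fun measurableSet_Iic
        (fun t ht => ?_)
      have ht0 : t < 0 := lt_of_le_of_lt ht (by linarith)
      rw [_root_.abs_of_neg ht0, show -b * -t = b * t by ring]
    have hIci' : ∫⁻ t in Set.Ici σ, ENNReal.ofReal ((2*M)^q * Real.exp (-b * |t|))
        = ∫⁻ t in Set.Ici σ, ENNReal.ofReal ((2*M)^q * Real.exp (-b * t)) := by
      refine setLIntegral_congr_fun measurableSet_Ici
        (fun t ht => ?_)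
      have ht0 : 0 ≤ t := le_trans hσ.le ht
      rw [_root_.abs_of_nonneg ht0]
    have htot : (∫⁻ t in {t : ℝ | σ ≤ |t|},
          ENNReal.ofReal (‖mellinAt c (fun r => f (r, 0)) t‖ ^ q))
        ≤ ENNReal.ofReal (2 * ((2*M)^q * (Real.exp (-b*σ)/b))) := by
      calc (∫⁻ t in {t : ℝ | σ ≤ |t|},
            ENNReal.ofReal (‖mellinAt c (fun r => f (r, 0)) t‖ ^ q))
          ≤ ∫⁻ t in {t : ℝ | σ ≤ |t|}, ENNReal.ofReal ((2*M)^q * Real.exp (-b * |t|)) :=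
            lintegral_mono fun t => ENNReal.ofReal_le_ofReal (hpt t)
        _ ≤ ∫⁻ t in Set.Iic (-σ) ∪ Set.Ici σ,
              ENNReal.ofReal ((2*M)^q * Real.exp (-b * |t|)) :=
            lintegral_mono_set hSsub
        _ ≤ (∫⁻ t in Set.Iic (-σ), ENNReal.ofReal ((2*M)^q * Real.exp (-b * |t|)))
            + ∫⁻ t in Set.Ici σ, ENNReal.ofReal ((2*M)^q * Real.exp (-b * |t|)) :=
            lintegral_union_le _ _ _
        _ = ENNReal.ofReal ((2*M)^q * (Real.exp (-b * σ) / b))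
            + ENNReal.ofReal ((2*M)^q * (Real.exp (-b * σ) / b)) := by
            rw [hIic', hIicL, hIci', hIciL]
        _ = ENNReal.ofReal (2 * ((2*M)^q * (Real.exp (-b*σ)/b))) := by
            rw [← ENNReal.ofReal_add (by positivity) (by positivity)]
            congr 1
            ring
    have hpow := ENNReal.rpow_le_rpow htot (by positivity : (0:ℝ) ≤ 1/q)
    rw [ENNReal.ofReal_rpow_of_nonneg (by positivity) (by positivity)] at hpow
    refine hpow.trans (le_of_eq ?_)
    congr 1
    have hD : 2 * ((2*M)^q * (Real.exp (-b*σ)/b)) = (2*M)^q * ((2/b) * Real.exp (-b*σ)) := by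
      field_simp
    rw [hD, Real.mul_rpow (by positivity) (by positivity),
      Real.mul_rpow (by positivity) (Real.exp_pos _).le,
      ← Real.rpow_mul (by positivity : (0:ℝ) ≤ 2*M),
      mul_one_div_cancel hq0.ne', Real.rpow_one, ← Real.exp_mul]
    rw [show -b * σ * (1/q) = -θ * σ by rw [hb]; field_simp]
    rw [hb]
    ring
  have hcont : Tendsto
      (fun θ : ℝ => ENNReal.ofReal (2 * M * (2 / (θ * q)) ^ (1 / q) * Real.exp (-θ * σ)))
      (𝓝[<] a) (𝓝 (ENNReal.ofReal (2 * M * (2 / (a * q)) ^ (1 / q) * Real.exp (-a * σ)))) := by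
    refine Filter.Tendsto.mono_left ?_ nhdsWithin_le_nhds
    refine (ENNReal.continuous_ofReal.tendsto _).comp ?_
    have h1 : ContinuousAt (fun θ : ℝ => 2 * M * (2 / (θ * q)) ^ (1 / q) * Real.exp (-θ * σ)) a := by
      have hbase : ContinuousAt (fun θ : ℝ => 2 / (θ * q)) a :=
        ContinuousAt.div continuousAt_const (continuousAt_id.mul continuousAt_const)
          (by positivity)
      have hrpow : ContinuousAt (fun θ : ℝ => (2 / (θ * q)) ^ (1 / q)) a :=
        (Real.continuousAt_rpow_const _ _ (Or.inr (by positivity))).comp hbase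
      have hexp : ContinuousAt (fun θ : ℝ => Real.exp (-θ * σ)) a :=
        Real.continuous_exp.continuousAt.comp ((continuousAt_id.neg).mul continuousAt_const)
      exact (continuousAt_const.mul hrpow).mul hexp
    exact h1
  refine ge_of_tendsto hcont ?_
  filter_upwards [Ioo_mem_nhdsLT_of_mem (⟨ha, le_refl a⟩ : a ∈ Set.Ioc 0 a)] with θ hθ
  exact hkey θ hθ.1 hθ.2
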